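/- If ψ_r(λ) = (μ, ν) with μ_i = λ_i − r·ν_i and ν_i = Σ_{j≥i} ⌊(λ_j − λ_{j+1})/r⌋, then the multiset of hook-lengths of bottom squares of λ (squares of leg-length 0) that are divisible by r equals the multiset obtained by multiplying every element of the multiset of hook-lengths of bottom squares of ν by r. -/

import Mathlib

open MvPowerSeries

/-- `f` encodes a partition: weakly decreasing with finitely many nonzero parts.
`f i` is the `(i+1)`-st part `λ_{i+1}`. -/
def PartitionFun (f : ℕ → ℕ) : Prop :=
  (∀ i, f (i + 1) ≤ f i) ∧ ∃ N, ∀ i, N ≤ i → f i = 0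

/-- The size `|λ|` of a partition. -/
noncomputable def psize (f : ℕ → ℕ) : ℕ := ∑ᶠ i, f i

/-- `conj f j` is the number of parts of `f` that are `> j`, i.e. the conjugate part `λ'_{j+1}`. -/
noncomputable def conj (f : ℕ → ℕ) (j : ℕ) : ℕ := {i | j < f i}.ncard

/-- The hook length of the cell in row `i+1`, column `j+1`:
`h = λ_{i+1} + λ'_{j+1} - (i+1) - (j+1) + 1`. -/
noncomputable def hookLen (f : ℕ → ℕ) (i j : ℕ) : ℕ := f i + conj f j - i - j - 1

/-- The cell `(i+1, j+1)` is a bottom square: it lies in the diagram and has leg length 0,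
i.e. `λ'_{j+1} = i + 1`. -/
noncomputable def bottomCell (f : ℕ → ℕ) (i j : ℕ) : Prop := j < f i ∧ conj f j = i + 1

/-- `ν_i = Σ_{j ≥ i} ⌊(λ_j − λ_{j+1})/r⌋` (0-based indexing). -/
noncomputable def nuF (r : ℕ) (f : ℕ → ℕ) : ℕ → ℕ :=
  fun i => ∑ᶠ j, if i ≤ j then (f j - f (j + 1)) / r else 0

/-- `μ_i = λ_i − r·ν_i`. -/
noncomputable def muF (r : ℕ) (f : ℕ → ℕ) : ℕ → ℕ :=
  fun i => f i - r * nuF r f i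

/-- An `r`-kernel: all successive part differences are `< r`. -/
def KernelFun (r : ℕ) (f : ℕ → ℕ) : Prop := ∀ i, f i - f (i + 1) < r

/-- An `r`-core: no hook length is divisible by `r`. -/
noncomputable def RCoreFun (r : ℕ) (f : ℕ → ℕ) : Prop :=
  ∀ i j, j < f i → ¬ r ∣ hookLen f i j

/-- `f` and `g` have the same `r`-core, expressed via the abacus/β-number characterisation:
for some `N` beyond the lengths of both partitions, the multisets of residues mod `r` of the
β-numbers `{λ_i + N − i : 1 ≤ i ≤ N}` of the two partitions coincide. -/
def SameRCore (r : ℕ) (f g : ℕ → ℕ) : Prop :=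
  ∃ N, (∀ i, N ≤ i → f i = 0) ∧ (∀ i, N ≤ i → g i = 0) ∧
    ∀ c, ((Finset.range N).filter fun i => (f i + N - i - 1) % r = c).card =
         ((Finset.range N).filter fun i => (g i + N - i - 1) % r = c).card

/-- `|H_r(λ)|`: the number of cells of `λ` whose hook length is divisible by `r`. -/
noncomputable def hrCard (r : ℕ) (f : ℕ → ℕ) : ℕ :=
  {p : ℕ × ℕ | p.2 < f p.1 ∧ r ∣ hookLen f p.1 p.2}.ncard

/-- `|H^{(b)}_r(λ)|`: the number of bottom squares of `λ` whose hook length is divisible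
by `r`. -/
noncomputable def botHrCard (r : ℕ) (f : ℕ → ℕ) : ℕ :=
  {p : ℕ × ℕ | bottomCell f p.1 p.2 ∧ r ∣ hookLen f p.1 p.2}.ncard

/-!
The bottom squares of row `i` of `λ` are the cells in columns `λ_{i+1} < j ≤ λ_i`, with hook
lengths `1, …, λ_i - λ_{i+1}`; so the multiplicity of `k` in `H^{(b)}(λ)` is the number of rows
`i` with `0 < k ≤ λ_i - λ_{i+1}`. Since `ν_i - ν_{i+1} = ⌊(λ_i - λ_{i+1}) / r⌋`, row `i` of `ν`
has a bottom square of hook length `k` exactly when row `i` of `λ` has one of hook length `r k`.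
-/

section Conjugate

variable {f : ℕ → ℕ}

theorem PartitionFun.antitone (hf : PartitionFun f) : Antitone f :=
  antitone_nat_of_succ_le hf.1

theorem setOf_lt_eq_Iio_conj (hf : PartitionFun f) (j : ℕ) :
    {k | j < f k} = Set.Iio (conj f j) := by
  have hex : ∃ n, f n ≤ j := by
    obtain ⟨N, hN⟩ := hf.2
    exact ⟨N, (hN N le_rfl).trans_le (Nat.zero_le j)⟩
  have hIio : {k | j < f k} = Set.Iio (Nat.find hex) := by
    ext k
    simp only [Set.mem_ofPred_eq, Set.mem_Iio, Nat.lt_find_iff, not_le]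
    exact ⟨fun hk m hm => hk.trans_le (hf.antitone hm), fun hk => hk k le_rfl⟩
  rw [conj, hIio, Set.ncard_Iio_nat]

theorem lt_conj_iff (hf : PartitionFun f) {i j : ℕ} : i < conj f j ↔ j < f i := by
  rw [← Set.mem_Iio, ← setOf_lt_eq_Iio_conj hf, Set.mem_ofPred_eq]

theorem bottomCell_iff (hf : PartitionFun f) {i j : ℕ} :
    bottomCell f i j ↔ f (i + 1) ≤ j ∧ j < f i := by
  have h₀ := lt_conj_iff hf (i := i) (j := j)
  have h₁ := lt_conj_iff hf (i := i + 1) (j := j)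
  unfold bottomCell
  omega

theorem hookLen_of_bottomCell {i j : ℕ} (hb : bottomCell f i j) : hookLen f i j = f i - j := by
  rw [hookLen, hb.2]
  omega

theorem ncard_bottomCell_hookLen_eq (hf : PartitionFun f) (k : ℕ) :
    {p : ℕ × ℕ | bottomCell f p.1 p.2 ∧ hookLen f p.1 p.2 = k}.ncard =
      {i | 0 < k ∧ k ≤ f i - f (i + 1)}.ncard := by
  have hmem : ∀ p : ℕ × ℕ, bottomCell f p.1 p.2 ∧ hookLen f p.1 p.2 = k ↔
      f (p.1 + 1) ≤ p.2 ∧ p.2 < f p.1 ∧ f p.1 - p.2 = k := fun p => by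
    constructor
    · rintro ⟨hb, rfl⟩
      exact ⟨(bottomCell_iff hf).1 hb |>.1, hb.1, (hookLen_of_bottomCell hb).symm⟩
    · rintro ⟨h₁, h₂, rfl⟩
      have hb := (bottomCell_iff hf).2 ⟨h₁, h₂⟩
      exact ⟨hb, hookLen_of_bottomCell hb⟩
  refine Set.ncard_congr (fun p _ => p.1) ?_ ?_ ?_
  · rintro ⟨i, j⟩ hp
    simp only [Set.mem_ofPred_eq, hmem] at hp ⊢
    omega
  · rintro ⟨i, j⟩ ⟨i', j'⟩ hp hp' (rfl : i = i')
    simp only [Set.mem_ofPred_eq, hmem] at hp hp'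
    rw [Prod.mk.injEq]
    omega
  · rintro i ⟨hk, hki⟩
    refine ⟨(i, f i - k), ?_, rfl⟩
    simp only [Set.mem_ofPred_eq, hmem]
    omega

end Conjugate

section Quotient

variable (r : ℕ) {f : ℕ → ℕ}

theorem exists_nuF_eq_zero (hf : PartitionFun f) : ∃ N, ∀ i, N ≤ i → nuF r f i = 0 := by
  obtain ⟨N, hN⟩ := hf.2
  refine ⟨N, fun i hi => finsum_eq_zero_of_forall_eq_zero fun j => ?_⟩
  split_ifs with hij
  · rw [hN j (by omega), hN (j + 1) (by omega), Nat.zero_sub, Nat.zero_div]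
  · rfl

theorem nuF_succ (hf : PartitionFun f) (i : ℕ) :
    nuF r f i = (f i - f (i + 1)) / r + nuF r f (i + 1) := by
  obtain ⟨N, hN⟩ := hf.2
  have hfin : ∀ m, Function.HasFiniteSupport
      fun j => if m ≤ j then (f j - f (j + 1)) / r else 0 := fun m =>
    (Set.finite_Iio N).subset fun j hj => by
      by_contra hjN
      simp only [Set.mem_Iio, not_lt] at hjN
      simp [hN j hjN, hN (j + 1) (by omega)] at hj
  have hsingle : ∑ᶠ j, (if j = i then (f i - f (i + 1)) / r else 0) = (f i - f (i + 1)) / r :=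
    (finsum_eq_single _ i fun j hj => if_neg hj).trans (if_pos rfl)
  rw [nuF, nuF, ← hsingle, ← finsum_add_distrib ?_ (hfin _)]
  · congr 1
    ext j
    rcases eq_or_ne j i with rfl | hji
    · simp
    · rw [if_neg hji, zero_add]
      exact if_congr (by omega) rfl rfl
  · exact (Set.finite_singleton i).subset fun j hj => by_contra fun h => hj (if_neg h)

theorem nuF_sub_nuF_succ (hf : PartitionFun f) (i : ℕ) :
    nuF r f i - nuF r f (i + 1) = (f i - f (i + 1)) / r := by
  rw [nuF_succ r hf i, Nat.add_sub_cancel]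

theorem nuF_partition (hf : PartitionFun f) : PartitionFun (nuF r f) :=
  ⟨fun i => (nuF_succ r hf i).symm ▸ Nat.le_add_left _ _, exists_nuF_eq_zero r hf⟩

end Quotient

/-- If `ψ_r(λ) = (μ, ν)`, then the multiset of hook lengths of bottom squares
of `λ` divisible by `r` equals `r` times the multiset of hook lengths of bottom squares of `ν`:
for every `h`, the number of bottom squares of `λ` with hook length `h` divisible by `r` equals
the number of bottom squares of `ν` whose hook length multiplied by `r` is `h`. -/
theorem stmt2 (r : ℕ) (hr : 0 < r) (f : ℕ → ℕ) (hf : PartitionFun f) (h : ℕ) :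
    {p : ℕ × ℕ | bottomCell f p.1 p.2 ∧ hookLen f p.1 p.2 = h ∧ r ∣ h}.ncard =
      {p : ℕ × ℕ | bottomCell (nuF r f) p.1 p.2 ∧
        r * hookLen (nuF r f) p.1 p.2 = h}.ncard := by
  by_cases hdvd : r ∣ h
  · obtain ⟨k, rfl⟩ := hdvd
    simp only [dvd_mul_right, and_true, mul_right_inj' hr.ne']
    rw [ncard_bottomCell_hookLen_eq hf, ncard_bottomCell_hookLen_eq (nuF_partition r hf)]
    congr 1
    ext i
    simp only [Set.mem_ofPred_eq, nuF_sub_nuF_succ r hf, Nat.le_div_iff_mul_le hr, mul_comm k r,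
      Nat.mul_pos_iff_of_pos_left hr]
  · have hempty : {p : ℕ × ℕ | bottomCell (nuF r f) p.1 p.2 ∧
        r * hookLen (nuF r f) p.1 p.2 = h} = ∅ :=
      Set.eq_empty_of_forall_notMem fun p hp => hdvd ⟨_, hp.2.symm⟩
    simp [hdvd, hempty]
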